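/- arXiv:math/0112124 — 12 statements merged into one kernel-verified Lean document; each statement's English description precedes it below -/
import Mathlib

section
/- Let R be a commutative ring and h ∈ R with h² = 0. Identify the index set {1,2,3,4} with pairs (i,j) ∈ {0,1}×{0,1} in the order (0,0),(0,1),(1,0),(1,1), and let p(0)=0, p(1)=1 denote parity. Define the 4×4 matrix K̂_h over R, indexed by such pairs, whose rows (in the above basis order) are [1,0,0,0], [h,0,1,0], [−h,1,0,0], [0,−h,−h,−1]. Define 8×8 matrices indexed by triples (a,b,c) ∈ {0,1}³ by (K̂₁₂)[(a,b,c),(d,e,f)] = K̂_h[(a,b),(d,e)]·δ_{c,f} and (K̂₂₃)[(a,b,c),(d,e,f)] = (−1)^{p(a)(p(b)+p(c)+p(e)+p(f))}·K̂_h[(b,c),(e,f)]·δ_{a,d}. Then the graded braid (Yang–Baxter) equation K̂₁₂ · K̂₂₃ · K̂₁₂ = K̂₂₃ · K̂₁₂ · K̂₂₃ holds. -/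
open Matrix

/-- Encoding of pairs in `{0,1} × {0,1}` in the order `(0,0),(0,1),(1,0),(1,1)`. -/
def enc (p : Fin 2 × Fin 2) : Fin 4 := ⟨2 * p.1.val + p.2.val, by omega⟩

/-- The matrix `K̂_h` with rows `[1,0,0,0], [h,0,1,0], [−h,1,0,0], [0,−h,−h,−1]`. -/
def Khat {R : Type*} [CommRing R] (h : R) :
    Matrix (Fin 2 × Fin 2) (Fin 2 × Fin 2) R :=
  Matrix.of fun p q =>
    (!![(1 : R), 0, 0, 0;
        h, 0, 1, 0;
        -h, 1, 0, 0;
        0, -h, -h, -1]) (enc p) (enc q)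

@[simp] lemma Khat_00_00 {R : Type*} [CommRing R] (h : R) : Khat h (0,0) (0,0) = 1 := rfl
@[simp] lemma Khat_00_01 {R : Type*} [CommRing R] (h : R) : Khat h (0,0) (0,1) = 0 := rfl
@[simp] lemma Khat_00_10 {R : Type*} [CommRing R] (h : R) : Khat h (0,0) (1,0) = 0 := rfl
@[simp] lemma Khat_00_11 {R : Type*} [CommRing R] (h : R) : Khat h (0,0) (1,1) = 0 := rfl
@[simp] lemma Khat_01_00 {R : Type*} [CommRing R] (h : R) : Khat h (0,1) (0,0) = h := rfl
@[simp] lemma Khat_01_01 {R : Type*} [CommRing R] (h : R) : Khat h (0,1) (0,1) = 0 := rfl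
@[simp] lemma Khat_01_10 {R : Type*} [CommRing R] (h : R) : Khat h (0,1) (1,0) = 1 := rfl
@[simp] lemma Khat_01_11 {R : Type*} [CommRing R] (h : R) : Khat h (0,1) (1,1) = 0 := rfl
@[simp] lemma Khat_10_00 {R : Type*} [CommRing R] (h : R) : Khat h (1,0) (0,0) = -h := rfl
@[simp] lemma Khat_10_01 {R : Type*} [CommRing R] (h : R) : Khat h (1,0) (0,1) = 1 := rfl
@[simp] lemma Khat_10_10 {R : Type*} [CommRing R] (h : R) : Khat h (1,0) (1,0) = 0 := rfl
@[simp] lemma Khat_10_11 {R : Type*} [CommRing R] (h : R) : Khat h (1,0) (1,1) = 0 := rfl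
@[simp] lemma Khat_11_00 {R : Type*} [CommRing R] (h : R) : Khat h (1,1) (0,0) = 0 := rfl
@[simp] lemma Khat_11_01 {R : Type*} [CommRing R] (h : R) : Khat h (1,1) (0,1) = -h := rfl
@[simp] lemma Khat_11_10 {R : Type*} [CommRing R] (h : R) : Khat h (1,1) (1,0) = -h := rfl
@[simp] lemma Khat_11_11 {R : Type*} [CommRing R] (h : R) : Khat h (1,1) (1,1) = -1 := rfl

/-- The (ungraded) embedding `K̂₁₂` acting on the first two factors. -/
def Khat12 {R : Type*} [CommRing R] (h : R) :
    Matrix (Fin 2 × Fin 2 × Fin 2) (Fin 2 × Fin 2 × Fin 2) R :=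
  Matrix.of fun p q =>
    Khat h (p.1, p.2.1) (q.1, q.2.1) * (if p.2.2 = q.2.2 then 1 else 0)

/-- The graded embedding `K̂₂₃` acting on the last two factors, with sign
`(−1)^{p(a)(p(b)+p(c)+p(e)+p(f))}` where the parity is `p(0)=0, p(1)=1`. -/
def Khat23 {R : Type*} [CommRing R] (h : R) :
    Matrix (Fin 2 × Fin 2 × Fin 2) (Fin 2 × Fin 2 × Fin 2) R :=
  Matrix.of fun p q =>
    (-1 : R) ^ (p.1.val * (p.2.1.val + p.2.2.val + q.2.1.val + q.2.2.val)) *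
      Khat h (p.2.1, p.2.2) (q.2.1, q.2.2) * (if p.1 = q.1 then 1 else 0)

set_option maxHeartbeats 2000000 in
/-- The matrix `K̂_h` satisfies the graded braid (Yang–Baxter) equation
`K̂₁₂ K̂₂₃ K̂₁₂ = K̂₂₃ K̂₁₂ K̂₂₃` whenever `h² = 0`. -/
theorem Khat_graded_braid {R : Type*} [CommRing R] (h : R) (hh : h ^ 2 = 0) :
    Khat12 h * Khat23 h * Khat12 h = Khat23 h * Khat12 h * Khat23 h := by
  have h2 : h * h = 0 := by rw [← pow_two]; exact hh
  ext ⟨a,b,c⟩ ⟨d,e,f⟩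
  simp only [Matrix.mul_apply, Khat12, Khat23, Khat, enc, Matrix.of_apply,
    Fintype.sum_prod_type, Fin.sum_univ_two]
  fin_cases a <;> fin_cases b <;> fin_cases c <;> fin_cases d <;> fin_cases e <;> fin_cases f <;>
  · try simp [Fin.isValue]
    try ring_nf
    try simp [hh, h2]
    try linear_combination (3 : R) * hh
    try linear_combination (-3 : R) * hh
end

section
/- Let R be a commutative ring and h ∈ R with h² = 0. Define the 4×4 matrix R_h over R, indexed by pairs (i,j) ∈ {0,1}×{0,1} in the order (0,0),(0,1),(1,0),(1,1), whose rows are [1,0,0,0], [−h,1,0,0], [h,0,1,0], [0,h,h,1]. Define 8×8 matrices indexed by triples (a,b,c) ∈ {0,1}³ by (R₁₂)[(a,b,c),(d,e,f)] = R_h[(a,b),(d,e)]·δ_{c,f}, (R₁₃)[(a,b,c),(d,e,f)] = R_h[(a,c),(d,f)]·δ_{b,e}, and (R₂₃)[(a,b,c),(d,e,f)] = R_h[(b,c),(e,f)]·δ_{a,d}. Then the (ungraded) quantum Yang–Baxter equation R₁₂ · R₁₃ · R₂₃ = R₂₃ · R₁₃ · R₁₂ holds. -/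
open Matrix

/-- The matrix `R_h` with rows `[1,0,0,0], [−h,1,0,0], [h,0,1,0], [0,h,h,1]`. -/
def Rmat {R : Type*} [CommRing R] (h : R) :
    Matrix (Fin 2 × Fin 2) (Fin 2 × Fin 2) R :=
  Matrix.of fun p q =>
    (!![(1 : R), 0, 0, 0;
        -h, 1, 0, 0;
        h, 0, 1, 0;
        0, h, h, 1]) (enc p) (enc q)

/-- The embedding `R₁₂` acting on the first two factors. -/
def R12 {R : Type*} [CommRing R] (h : R) :
    Matrix (Fin 2 × Fin 2 × Fin 2) (Fin 2 × Fin 2 × Fin 2) R :=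
  Matrix.of fun p q =>
    Rmat h (p.1, p.2.1) (q.1, q.2.1) * (if p.2.2 = q.2.2 then 1 else 0)

/-- The embedding `R₁₃` acting on the first and third factors. -/
def R13 {R : Type*} [CommRing R] (h : R) :
    Matrix (Fin 2 × Fin 2 × Fin 2) (Fin 2 × Fin 2 × Fin 2) R :=
  Matrix.of fun p q =>
    Rmat h (p.1, p.2.2) (q.1, q.2.2) * (if p.2.1 = q.2.1 then 1 else 0)

/-- The embedding `R₂₃` acting on the last two factors. -/
def R23 {R : Type*} [CommRing R] (h : R) :
    Matrix (Fin 2 × Fin 2 × Fin 2) (Fin 2 × Fin 2 × Fin 2) R :=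
  Matrix.of fun p q =>
    Rmat h (p.2.1, p.2.2) (q.2.1, q.2.2) * (if p.1 = q.1 then 1 else 0)

set_option maxHeartbeats 1000000

section Aux
variable {α : Type*}
private lemma v8_0 (a b c d e f g k : α) : ![a,b,c,d,e,f,g,k] 0 = a := rfl
private lemma v8m_0 (a b c d e f g k : α) (p : 0 < 8) : ![a,b,c,d,e,f,g,k] ⟨0, p⟩ = a := rfl
private lemma v8_1 (a b c d e f g k : α) : ![a,b,c,d,e,f,g,k] 1 = b := rfl
private lemma v8m_1 (a b c d e f g k : α) (p : 1 < 8) : ![a,b,c,d,e,f,g,k] ⟨1, p⟩ = b := rfl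
private lemma v8_2 (a b c d e f g k : α) : ![a,b,c,d,e,f,g,k] 2 = c := rfl
private lemma v8m_2 (a b c d e f g k : α) (p : 2 < 8) : ![a,b,c,d,e,f,g,k] ⟨2, p⟩ = c := rfl
private lemma v8_3 (a b c d e f g k : α) : ![a,b,c,d,e,f,g,k] 3 = d := rfl
private lemma v8m_3 (a b c d e f g k : α) (p : 3 < 8) : ![a,b,c,d,e,f,g,k] ⟨3, p⟩ = d := rfl
private lemma v8_4 (a b c d e f g k : α) : ![a,b,c,d,e,f,g,k] 4 = e := rfl
private lemma v8m_4 (a b c d e f g k : α) (p : 4 < 8) : ![a,b,c,d,e,f,g,k] ⟨4, p⟩ = e := rfl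
private lemma v8_5 (a b c d e f g k : α) : ![a,b,c,d,e,f,g,k] 5 = f := rfl
private lemma v8m_5 (a b c d e f g k : α) (p : 5 < 8) : ![a,b,c,d,e,f,g,k] ⟨5, p⟩ = f := rfl
private lemma v8_6 (a b c d e f g k : α) : ![a,b,c,d,e,f,g,k] 6 = g := rfl
private lemma v8m_6 (a b c d e f g k : α) (p : 6 < 8) : ![a,b,c,d,e,f,g,k] ⟨6, p⟩ = g := rfl
private lemma v8_7 (a b c d e f g k : α) : ![a,b,c,d,e,f,g,k] 7 = k := rfl
private lemma v8m_7 (a b c d e f g k : α) (p : 7 < 8) : ![a,b,c,d,e,f,g,k] ⟨7, p⟩ = k := rfl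
private lemma v4_0 (a b c d : α) : ![a,b,c,d] 0 = a := rfl
private lemma v4m_0 (a b c d : α) (p : 0 < 4) : ![a,b,c,d] ⟨0, p⟩ = a := rfl
private lemma v4_1 (a b c d : α) : ![a,b,c,d] 1 = b := rfl
private lemma v4m_1 (a b c d : α) (p : 1 < 4) : ![a,b,c,d] ⟨1, p⟩ = b := rfl
private lemma v4_2 (a b c d : α) : ![a,b,c,d] 2 = c := rfl
private lemma v4m_2 (a b c d : α) (p : 2 < 4) : ![a,b,c,d] ⟨2, p⟩ = c := rfl
private lemma v4_3 (a b c d : α) : ![a,b,c,d] 3 = d := rfl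
private lemma v4m_3 (a b c d : α) (p : 3 < 4) : ![a,b,c,d] ⟨3, p⟩ = d := rfl
end Aux

/-- Encoding of triples as `Fin 8`. -/
def enc8 : (Fin 2 × Fin 2 × Fin 2) ≃ Fin 8 where
  toFun p := ⟨4 * p.1.val + 2 * p.2.1.val + p.2.2.val, by omega⟩
  invFun i := (⟨i.val / 4, by omega⟩, ⟨i.val / 2 % 2, by omega⟩, ⟨i.val % 2, by omega⟩)
  left_inv := by decide
  right_inv := by decide

def M12' {R : Type*} [CommRing R] (h : R) : Matrix (Fin 8) (Fin 8) R :=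
  !![1, 0, 0, 0, 0, 0, 0, 0;
     0, 1, 0, 0, 0, 0, 0, 0;
     -h, 0, 1, 0, 0, 0, 0, 0;
     0, -h, 0, 1, 0, 0, 0, 0;
     h, 0, 0, 0, 1, 0, 0, 0;
     0, h, 0, 0, 0, 1, 0, 0;
     0, 0, h, 0, h, 0, 1, 0;
     0, 0, 0, h, 0, h, 0, 1]

def M13' {R : Type*} [CommRing R] (h : R) : Matrix (Fin 8) (Fin 8) R :=
  !![1, 0, 0, 0, 0, 0, 0, 0;
     -h, 1, 0, 0, 0, 0, 0, 0;
     0, 0, 1, 0, 0, 0, 0, 0;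
     0, 0, -h, 1, 0, 0, 0, 0;
     h, 0, 0, 0, 1, 0, 0, 0;
     0, h, 0, 0, h, 1, 0, 0;
     0, 0, h, 0, 0, 0, 1, 0;
     0, 0, 0, h, 0, 0, h, 1]

def M23' {R : Type*} [CommRing R] (h : R) : Matrix (Fin 8) (Fin 8) R :=
  !![1, 0, 0, 0, 0, 0, 0, 0;
     -h, 1, 0, 0, 0, 0, 0, 0;
     h, 0, 1, 0, 0, 0, 0, 0;
     0, h, h, 1, 0, 0, 0, 0;
     0, 0, 0, 0, 1, 0, 0, 0;
     0, 0, 0, 0, -h, 1, 0, 0;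
     0, 0, 0, 0, h, 0, 1, 0;
     0, 0, 0, 0, 0, h, h, 1]

def MA' {R : Type*} [CommRing R] (h : R) : Matrix (Fin 8) (Fin 8) R :=
  !![1, 0, 0, 0, 0, 0, 0, 0;
     -h, 1, 0, 0, 0, 0, 0, 0;
     -h, 0, 1, 0, 0, 0, 0, 0;
     0, -h, -h, 1, 0, 0, 0, 0;
     2*h, 0, 0, 0, 1, 0, 0, 0;
     0, 2*h, 0, 0, h, 1, 0, 0;
     0, 0, 2*h, 0, h, 0, 1, 0;
     0, 0, 0, 2*h, 0, h, h, 1]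

def MB' {R : Type*} [CommRing R] (h : R) : Matrix (Fin 8) (Fin 8) R :=
  !![1, 0, 0, 0, 0, 0, 0, 0;
     -2*h, 1, 0, 0, 0, 0, 0, 0;
     h, 0, 1, 0, 0, 0, 0, 0;
     0, h, 0, 1, 0, 0, 0, 0;
     h, 0, 0, 0, 1, 0, 0, 0;
     0, h, 0, 0, 0, 1, 0, 0;
     0, 0, h, 0, h, 0, 1, 0;
     0, 0, 0, h, 0, h, 2*h, 1]

def ML' {R : Type*} [CommRing R] (h : R) : Matrix (Fin 8) (Fin 8) R :=
  !![1, 0, 0, 0, 0, 0, 0, 0;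
     -2*h, 1, 0, 0, 0, 0, 0, 0;
     0, 0, 1, 0, 0, 0, 0, 0;
     0, 0, 0, 1, 0, 0, 0, 0;
     2*h, 0, 0, 0, 1, 0, 0, 0;
     0, 2*h, 0, 0, 0, 1, 0, 0;
     0, 0, 2*h, 0, 2*h, 0, 1, 0;
     0, 0, 0, 2*h, 0, 2*h, 2*h, 1]

lemma R12_eq {R : Type*} [CommRing R] (h : R) : R12 h = (M12' h).submatrix enc8 enc8 := by
  ext ⟨a, b, c⟩ ⟨d, e, f⟩
  fin_cases a <;> fin_cases b <;> fin_cases c <;> fin_cases d <;> fin_cases e <;> fin_cases f <;>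
    simp only [R12, Rmat, enc, enc8, M12', Matrix.submatrix_apply, Matrix.of_apply,
      Equiv.coe_fn_mk, Fin.isValue, v8_0, v8m_0, v8_1, v8m_1, v8_2, v8m_2, v8_3, v8m_3, v8_4, v8m_4, v8_5, v8m_5, v8_6, v8m_6, v8_7, v8m_7, v4_0, v4m_0, v4_1, v4m_1, v4_2, v4m_2, v4_3, v4m_3, if_true, if_false,
      mul_one, mul_zero, one_mul, zero_mul, ite_self] <;>
    norm_num

lemma R13_eq {R : Type*} [CommRing R] (h : R) : R13 h = (M13' h).submatrix enc8 enc8 := by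
  ext ⟨a, b, c⟩ ⟨d, e, f⟩
  fin_cases a <;> fin_cases b <;> fin_cases c <;> fin_cases d <;> fin_cases e <;> fin_cases f <;>
    simp only [R13, Rmat, enc, enc8, M13', Matrix.submatrix_apply, Matrix.of_apply,
      Equiv.coe_fn_mk, Fin.isValue, v8_0, v8m_0, v8_1, v8m_1, v8_2, v8m_2, v8_3, v8m_3, v8_4, v8m_4, v8_5, v8m_5, v8_6, v8m_6, v8_7, v8m_7, v4_0, v4m_0, v4_1, v4m_1, v4_2, v4m_2, v4_3, v4m_3, if_true, if_false,
      mul_one, mul_zero, one_mul, zero_mul, ite_self] <;>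
    norm_num

lemma R23_eq {R : Type*} [CommRing R] (h : R) : R23 h = (M23' h).submatrix enc8 enc8 := by
  ext ⟨a, b, c⟩ ⟨d, e, f⟩
  fin_cases a <;> fin_cases b <;> fin_cases c <;> fin_cases d <;> fin_cases e <;> fin_cases f <;>
    simp only [R23, Rmat, enc, enc8, M23', Matrix.submatrix_apply, Matrix.of_apply,
      Equiv.coe_fn_mk, Fin.isValue, v8_0, v8m_0, v8_1, v8m_1, v8_2, v8m_2, v8_3, v8m_3, v8_4, v8m_4, v8_5, v8m_5, v8_6, v8m_6, v8_7, v8m_7, v4_0, v4m_0, v4_1, v4m_1, v4_2, v4m_2, v4_3, v4m_3, if_true, if_false,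
      mul_one, mul_zero, one_mul, zero_mul, ite_self] <;>
    norm_num

lemma mul12_13 {R : Type*} [CommRing R] (h : R) (hh : h * h = 0) :
    M12' h * M13' h = MA' h := by
  ext i j
  fin_cases i <;> fin_cases j <;>
    simp only [M12', M13', MA', Matrix.mul_apply, Fin.sum_univ_eight, Matrix.of_apply,
      v8_0, v8m_0, v8_1, v8m_1, v8_2, v8m_2, v8_3, v8m_3, v8_4, v8m_4, v8_5, v8m_5, v8_6, v8m_6, v8_7, v8m_7] <;>
    first
      | ring1
      | linear_combination hh
      | linear_combination -hh
      | linear_combination 2*hh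
      | linear_combination -2*hh
      | linear_combination 3*hh
      | linear_combination -3*hh

lemma mulA_23 {R : Type*} [CommRing R] (h : R) (hh : h * h = 0) :
    MA' h * M23' h = ML' h := by
  ext i j
  fin_cases i <;> fin_cases j <;>
    simp only [MA', M23', ML', Matrix.mul_apply, Fin.sum_univ_eight, Matrix.of_apply,
      v8_0, v8m_0, v8_1, v8m_1, v8_2, v8m_2, v8_3, v8m_3, v8_4, v8m_4, v8_5, v8m_5, v8_6, v8m_6, v8_7, v8m_7] <;>
    first
      | ring1
      | linear_combination hh
      | linear_combination -hh
      | linear_combination 2*hh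
      | linear_combination -2*hh
      | linear_combination 3*hh
      | linear_combination -3*hh

lemma mul23_13 {R : Type*} [CommRing R] (h : R) (hh : h * h = 0) :
    M23' h * M13' h = MB' h := by
  ext i j
  fin_cases i <;> fin_cases j <;>
    simp only [M23', M13', MB', Matrix.mul_apply, Fin.sum_univ_eight, Matrix.of_apply,
      v8_0, v8m_0, v8_1, v8m_1, v8_2, v8m_2, v8_3, v8m_3, v8_4, v8m_4, v8_5, v8m_5, v8_6, v8m_6, v8_7, v8m_7] <;>
    first
      | ring1
      | linear_combination hh
      | linear_combination -hh
      | linear_combination 2*hh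
      | linear_combination -2*hh
      | linear_combination 3*hh
      | linear_combination -3*hh

lemma mulB_12 {R : Type*} [CommRing R] (h : R) (hh : h * h = 0) :
    MB' h * M12' h = ML' h := by
  ext i j
  fin_cases i <;> fin_cases j <;>
    simp only [MB', M12', ML', Matrix.mul_apply, Fin.sum_univ_eight, Matrix.of_apply,
      v8_0, v8m_0, v8_1, v8m_1, v8_2, v8m_2, v8_3, v8m_3, v8_4, v8m_4, v8_5, v8m_5, v8_6, v8m_6, v8_7, v8m_7] <;>
    first
      | ring1
      | linear_combination hh
      | linear_combination -hh
      | linear_combination 2*hh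
      | linear_combination -2*hh
      | linear_combination 3*hh
      | linear_combination -3*hh

/-- The matrix `R_h` satisfies the (ungraded) quantum Yang–Baxter equation
`R₁₂ R₁₃ R₂₃ = R₂₃ R₁₃ R₁₂` whenever `h² = 0`. -/
theorem Rmat_ungraded_YangBaxter {R : Type*} [CommRing R] (h : R) (hh : h ^ 2 = 0) :
    R12 h * R13 h * R23 h = R23 h * R13 h * R12 h := by
  have hh' : h * h = 0 := by rw [← sq]; exact hh
  rw [R12_eq, R13_eq, R23_eq, Matrix.submatrix_mul_equiv, Matrix.submatrix_mul_equiv,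
    Matrix.submatrix_mul_equiv, Matrix.submatrix_mul_equiv,
    mul12_13 h hh', mulA_23 h hh', mul23_13 h hh', mulB_12 h hh']
end

section
/- Let R be a commutative ring and h ∈ R with h² = 0. Define the 4×4 matrix R_h over R, indexed by pairs (i,j) ∈ {0,1}×{0,1} in the order (0,0),(0,1),(1,0),(1,1), whose rows are [1,0,0,0], [−h,1,0,0], [h,0,1,0], [0,h,h,1]. With parity p(0)=0, p(1)=1, define 8×8 matrices indexed by triples (a,b,c) ∈ {0,1}³ by (R₁₂)[(a,b,c),(d,e,f)] = R_h[(a,b),(d,e)]·δ_{c,f}, (R₁₃)[(a,b,c),(d,e,f)] = (−1)^{p(b)(p(c)+p(f))}·R_h[(a,c),(d,f)]·δ_{b,e}, and (R₂₃)[(a,b,c),(d,e,f)] = (−1)^{p(a)(p(b)+p(c)+p(e)+p(f))}·R_h[(b,c),(e,f)]·δ_{a,d}. Then the graded quantum Yang–Baxter equation R₁₂ · R₁₃ · R₂₃ = R₂₃ · R₁₃ · R₁₂ holds. -/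
open Matrix

/-- The graded embedding `R₁₂` acting on the first two factors. -/
def R12g {R : Type*} [CommRing R] (h : R) :
    Matrix (Fin 2 × Fin 2 × Fin 2) (Fin 2 × Fin 2 × Fin 2) R :=
  Matrix.of fun p q =>
    Rmat h (p.1, p.2.1) (q.1, q.2.1) * (if p.2.2 = q.2.2 then 1 else 0)

/-- The graded embedding `R₁₃` acting on the first and third factors, with sign
`(−1)^{p(b)(p(c)+p(f))}` where the parity is `p(0)=0, p(1)=1`. -/
def R13g {R : Type*} [CommRing R] (h : R) :
    Matrix (Fin 2 × Fin 2 × Fin 2) (Fin 2 × Fin 2 × Fin 2) R :=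
  Matrix.of fun p q =>
    (-1 : R) ^ (p.2.1.val * (p.2.2.val + q.2.2.val)) *
      Rmat h (p.1, p.2.2) (q.1, q.2.2) * (if p.2.1 = q.2.1 then 1 else 0)

/-- The graded embedding `R₂₃` acting on the last two factors, with sign
`(−1)^{p(a)(p(b)+p(c)+p(e)+p(f))}`. -/
def R23g {R : Type*} [CommRing R] (h : R) :
    Matrix (Fin 2 × Fin 2 × Fin 2) (Fin 2 × Fin 2 × Fin 2) R :=
  Matrix.of fun p q =>
    (-1 : R) ^ (p.1.val * (p.2.1.val + p.2.2.val + q.2.1.val + q.2.2.val)) *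
      Rmat h (p.2.1, p.2.2) (q.2.1, q.2.2) * (if p.1 = q.1 then 1 else 0)

@[simp] lemma Rmat_00_00 {R : Type*} [CommRing R] (h : R) : Rmat h (0,0) (0,0) = 1 := rfl
@[simp] lemma Rmat_00_01 {R : Type*} [CommRing R] (h : R) : Rmat h (0,0) (0,1) = 0 := rfl
@[simp] lemma Rmat_00_10 {R : Type*} [CommRing R] (h : R) : Rmat h (0,0) (1,0) = 0 := rfl
@[simp] lemma Rmat_00_11 {R : Type*} [CommRing R] (h : R) : Rmat h (0,0) (1,1) = 0 := rfl
@[simp] lemma Rmat_01_00 {R : Type*} [CommRing R] (h : R) : Rmat h (0,1) (0,0) = -h := rfl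
@[simp] lemma Rmat_01_01 {R : Type*} [CommRing R] (h : R) : Rmat h (0,1) (0,1) = 1 := rfl
@[simp] lemma Rmat_01_10 {R : Type*} [CommRing R] (h : R) : Rmat h (0,1) (1,0) = 0 := rfl
@[simp] lemma Rmat_01_11 {R : Type*} [CommRing R] (h : R) : Rmat h (0,1) (1,1) = 0 := rfl
@[simp] lemma Rmat_10_00 {R : Type*} [CommRing R] (h : R) : Rmat h (1,0) (0,0) = h := rfl
@[simp] lemma Rmat_10_01 {R : Type*} [CommRing R] (h : R) : Rmat h (1,0) (0,1) = 0 := rfl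
@[simp] lemma Rmat_10_10 {R : Type*} [CommRing R] (h : R) : Rmat h (1,0) (1,0) = 1 := rfl
@[simp] lemma Rmat_10_11 {R : Type*} [CommRing R] (h : R) : Rmat h (1,0) (1,1) = 0 := rfl
@[simp] lemma Rmat_11_00 {R : Type*} [CommRing R] (h : R) : Rmat h (1,1) (0,0) = 0 := rfl
@[simp] lemma Rmat_11_01 {R : Type*} [CommRing R] (h : R) : Rmat h (1,1) (0,1) = h := rfl
@[simp] lemma Rmat_11_10 {R : Type*} [CommRing R] (h : R) : Rmat h (1,1) (1,0) = h := rfl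
@[simp] lemma Rmat_11_11 {R : Type*} [CommRing R] (h : R) : Rmat h (1,1) (1,1) = 1 := rfl

set_option maxHeartbeats 2000000 in
/-- The matrix `R_h` satisfies the graded quantum Yang–Baxter equation
`R₁₂ R₁₃ R₂₃ = R₂₃ R₁₃ R₁₂` whenever `h² = 0`. -/
theorem Rmat_graded_YangBaxter {R : Type*} [CommRing R] (h : R) (hh : h ^ 2 = 0) :
    R12g h * R13g h * R23g h = R23g h * R13g h * R12g h := by
  have hh' : h * h = 0 := by rw [← sq]; exact hh
  ext ⟨a, b, c⟩ ⟨d, e, f⟩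
  fin_cases a <;> fin_cases b <;> fin_cases c <;> fin_cases d <;> fin_cases e <;> fin_cases f <;>
    · simp only [Matrix.mul_apply, R12g, R13g, R23g, Matrix.of_apply,
        Fintype.sum_prod_type, Fin.sum_univ_two, Rmat_00_00, Rmat_00_01, Rmat_00_10, Rmat_00_11, Rmat_01_00, Rmat_01_01, Rmat_01_10, Rmat_01_11, Rmat_10_00, Rmat_10_01, Rmat_10_10, Rmat_10_11, Rmat_11_00, Rmat_11_01, Rmat_11_10, Rmat_11_11]
      norm_num [-Prod.mk_zero_zero, -Prod.mk_one_one]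
      try ring_nf
      try simp [hh', sq]
      try ring
end

section
/- Let R be a commutative ring and h ∈ R with h² = 0. Define the 4×4 matrix K_h over R, indexed by pairs (i,j) ∈ {0,1}×{0,1} in the order (0,0),(0,1),(1,0),(1,1), whose rows are [1,0,0,0], [h,1,0,0], [−h,0,1,0], [0,−h,−h,1]. With parity p(0)=0, p(1)=1, define 8×8 matrices indexed by triples (a,b,c) ∈ {0,1}³: the ungraded embeddings (K₁₂)[(a,b,c),(d,e,f)] = K_h[(a,b),(d,e)]·δ_{c,f}, (K₁₃)[(a,b,c),(d,e,f)] = K_h[(a,c),(d,f)]·δ_{b,e}, (K₂₃)[(a,b,c),(d,e,f)] = K_h[(b,c),(e,f)]·δ_{a,d}, and the graded embeddings (K'₁₂) = K₁₂, (K'₁₃)[(a,b,c),(d,e,f)] = (−1)^{p(b)(p(c)+p(f))}·K_h[(a,c),(d,f)]·δ_{b,e}, (K'₂₃)[(a,b,c),(d,e,f)] = (−1)^{p(a)(p(b)+p(c)+p(e)+p(f))}·K_h[(b,c),(e,f)]·δ_{a,d}. Then both the ungraded Yang–Baxter equation K₁₂ · K₁₃ · K₂₃ = K₂₃ · K₁₃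 · K₁₂ and the graded Yang–Baxter equation K'₁₂ · K'₁₃ · K'₂₃ = K'₂₃ · K'₁₃ · K'₁₂ hold. -/
open Matrix

/-- The matrix `K_h` with rows `[1,0,0,0], [h,1,0,0], [−h,0,1,0], [0,−h,−h,1]`. -/
def Kmat {R : Type*} [CommRing R] (h : R) :
    Matrix (Fin 2 × Fin 2) (Fin 2 × Fin 2) R :=
  Matrix.of fun p q =>
    (!![(1 : R), 0, 0, 0;
        h, 1, 0, 0;
        -h, 0, 1, 0;
        0, -h, -h, 1]) (enc p) (enc q)

/-- The ungraded embedding `K₁₂` acting on the first two factors. -/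
def K12 {R : Type*} [CommRing R] (h : R) :
    Matrix (Fin 2 × Fin 2 × Fin 2) (Fin 2 × Fin 2 × Fin 2) R :=
  Matrix.of fun p q =>
    Kmat h (p.1, p.2.1) (q.1, q.2.1) * (if p.2.2 = q.2.2 then 1 else 0)

/-- The ungraded embedding `K₁₃` acting on the first and third factors. -/
def K13 {R : Type*} [CommRing R] (h : R) :
    Matrix (Fin 2 × Fin 2 × Fin 2) (Fin 2 × Fin 2 × Fin 2) R :=
  Matrix.of fun p q =>
    Kmat h (p.1, p.2.2) (q.1, q.2.2) * (if p.2.1 = q.2.1 then 1 else 0)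

/-- The ungraded embedding `K₂₃` acting on the last two factors. -/
def K23 {R : Type*} [CommRing R] (h : R) :
    Matrix (Fin 2 × Fin 2 × Fin 2) (Fin 2 × Fin 2 × Fin 2) R :=
  Matrix.of fun p q =>
    Kmat h (p.2.1, p.2.2) (q.2.1, q.2.2) * (if p.1 = q.1 then 1 else 0)

/-- The graded embedding `K'₁₂` (equal to `K₁₂`). -/
def K12g {R : Type*} [CommRing R] (h : R) :
    Matrix (Fin 2 × Fin 2 × Fin 2) (Fin 2 × Fin 2 × Fin 2) R :=
  K12 h

/-- The graded embedding `K'₁₃`, with sign `(−1)^{p(b)(p(c)+p(f))}`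
where the parity is `p(0)=0, p(1)=1`. -/
def K13g {R : Type*} [CommRing R] (h : R) :
    Matrix (Fin 2 × Fin 2 × Fin 2) (Fin 2 × Fin 2 × Fin 2) R :=
  Matrix.of fun p q =>
    (-1 : R) ^ (p.2.1.val * (p.2.2.val + q.2.2.val)) *
      Kmat h (p.1, p.2.2) (q.1, q.2.2) * (if p.2.1 = q.2.1 then 1 else 0)

/-- The graded embedding `K'₂₃`, with sign `(−1)^{p(a)(p(b)+p(c)+p(e)+p(f))}`. -/
def K23g {R : Type*} [CommRing R] (h : R) :
    Matrix (Fin 2 × Fin 2 × Fin 2) (Fin 2 × Fin 2 × Fin 2) R :=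
  Matrix.of fun p q =>
    (-1 : R) ^ (p.1.val * (p.2.1.val + p.2.2.val + q.2.1.val + q.2.2.val)) *
      Kmat h (p.2.1, p.2.2) (q.2.1, q.2.2) * (if p.1 = q.1 then 1 else 0)

set_option maxHeartbeats 40000000 in
/-- The matrix `K_h` satisfies both the ungraded Yang–Baxter equation
`K₁₂ K₁₃ K₂₃ = K₂₃ K₁₃ K₁₂` and the graded Yang–Baxter equation
`K'₁₂ K'₁₃ K'₂₃ = K'₂₃ K'₁₃ K'₁₂` whenever `h² = 0`. -/
theorem Kmat_both_YangBaxter {R : Type*} [CommRing R] (h : R) (hh : h ^ 2 = 0) :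
    K12 h * K13 h * K23 h = K23 h * K13 h * K12 h ∧
    K12g h * K13g h * K23g h = K23g h * K13g h * K12g h := by

  have h3 : h ^ 3 = 0 := by linear_combination h * hh
  constructor
  · rw [← Matrix.ext_iff]
    simp only [Prod.forall, Fin.forall_fin_two]
    and_intros <;>
    · simp only [Matrix.mul_apply, Fintype.sum_prod_type, Fin.sum_univ_two,
        K12, K13, K23, Kmat, enc, Matrix.of_apply]
      norm_num
      try (first
        | ring1
        | linear_combination h*hh
        | linear_combination -(h*hh)
        | linear_combination 2*hh
        | linear_combination -2*hh
        | linear_combination 2*h*hh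
        | linear_combination -2*h*hh
        | linear_combination 3*hh
        | linear_combination -3*hh
        | (ring_nf; simp [hh, h3]))
  · rw [← Matrix.ext_iff]
    simp only [Prod.forall, Fin.forall_fin_two]
    and_intros <;>
    · simp only [Matrix.mul_apply, Fintype.sum_prod_type, Fin.sum_univ_two,
        K12g, K13g, K23g, K12, Kmat, enc, Matrix.of_apply]
      norm_num
      try (first
        | ring1
        | linear_combination h*hh
        | linear_combination -(h*hh)
        | linear_combination 2*hh
        | linear_combination -2*hh
        | linear_combination 2*h*hh
        | linear_combination -2*h*hh
        | linear_combination 3*hh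
        | linear_combination -3*hh
        | (ring_nf; simp [hh, h3]))
end

section
/- Let S be an associative unital ring and let x, θ, a, β, γ, d, h ∈ S satisfy: h² = 0; h commutes with x, a, d and anticommutes with θ, β, γ (i.e. hθ = −θh, hβ = −βh, hγ = −γh); a and d commute with both x and θ; β and γ commute with x and anticommute with θ (βθ = −θβ, γθ = −θγ); the h-superplane relations xθ = θx + hx² and θ² = −hθx hold; and the GL_h(1|1) relations hold: aβ = βa; aγ = γa + h(a² + γβ − ad); dβ = βd; dγ = γd − h(d² − γβ − da); β² = 0; γ² = hγ(d − a); βγ = −γβ + hβ(d − a); ad = da + hβ(a − d). Define the transformed coordinates X := a·x + β·θ and Θ := γ·x + d·θ. Then X and Θ again satisfy the h-superplane relations: XΘ = ΘX + hX² and Θ² = −hΘX. -/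
private lemma swap_aux {S : Type*} [Ring S] {p q r : S} (hpq : p * q = r) (t : S) :
    p * (q * t) = r * t := by rw [← mul_assoc, hpq]

/-- Covariance of the `h`-superplane: if `(x, θ)` satisfies the `h`-superplane
relations and `(a, β; γ, d)` satisfies the `GL_h(1|1)` relations, then the
transformed coordinates `X = a·x + β·θ`, `Θ = γ·x + d·θ` again satisfy the
`h`-superplane relations. -/
theorem h_superplane_covariance {S : Type*} [Ring S]
    (x θ a β γ d h : S)
    -- the Grassmann parameter h
    (hh : h ^ 2 = 0)
    (hhx : h * x = x * h) (hha : h * a = a * h) (hhd : h * d = d * h)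
    (hhθ : h * θ = -(θ * h)) (hhβ : h * β = -(β * h)) (hhγ : h * γ = -(γ * h))
    -- the matrix entries (anti)commute with the coordinates
    (hax : a * x = x * a) (haθ : a * θ = θ * a)
    (hdx : d * x = x * d) (hdθ : d * θ = θ * d)
    (hβx : β * x = x * β) (hγx : γ * x = x * γ)
    (hβθ : β * θ = -(θ * β)) (hγθ : γ * θ = -(θ * γ))
    -- the h-superplane relations
    (hxθ : x * θ = θ * x + h * x ^ 2) (hθθ : θ ^ 2 = -(h * (θ * x)))
    -- the GL_h(1|1) relations
    (r1 : a * β = β * a)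
    (r2 : a * γ = γ * a + h * (a ^ 2 + γ * β - a * d))
    (r3 : d * β = β * d)
    (r4 : d * γ = γ * d - h * (d ^ 2 - γ * β - d * a))
    (r5 : β ^ 2 = 0)
    (r6 : γ ^ 2 = h * (γ * (d - a)))
    (r7 : β * γ = -(γ * β) + h * (β * (d - a)))
    (r8 : a * d = d * a + h * (β * (a - d))) :
    (a * x + β * θ) * (γ * x + d * θ) =
        (γ * x + d * θ) * (a * x + β * θ) + h * (a * x + β * θ) ^ 2 ∧
    (γ * x + d * θ) ^ 2 = -(h * ((γ * x + d * θ) * (a * x + β * θ))) := by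
  -- reorient all relations so that letters are moved into the order
  -- h < γ < β < d < a < θ < x
  have e1 : x * h = h * x := hhx.symm
  have e2 : x * γ = γ * x := hγx.symm
  have e3 : x * β = β * x := hβx.symm
  have e4 : x * d = d * x := hdx.symm
  have e5 : x * a = a * x := hax.symm
  have e6 : x * θ = θ * x + h * (x * x) := by rw [hxθ, pow_two]
  have e7 : θ * h = -(h * θ) := by rw [hhθ, neg_neg]
  have e8 : θ * γ = -(γ * θ) := by rw [hγθ, neg_neg]
  have e9 : θ * β = -(β * θ) := by rw [hβθ, neg_neg]
  have e10 : θ * d = d * θ := hdθ.symm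
  have e11 : θ * a = a * θ := haθ.symm
  have e12 : a * h = h * a := hha.symm
  have e13 : a * γ = γ * a + h * (a * a + γ * β - a * d) := by rw [r2, pow_two]
  have e14 : a * β = β * a := r1
  have e15 : a * d = d * a + h * (β * (a - d)) := r8
  have e16 : d * h = h * d := hhd.symm
  have e17 : d * γ = γ * d - h * (d * d - γ * β - d * a) := by rw [r4, pow_two]
  have e18 : d * β = β * d := r3
  have e19 : β * h = -(h * β) := by rw [hhβ, neg_neg]
  have e20 : β * γ = -(γ * β) + h * (β * (d - a)) := r7
  have e21 : γ * h = -(h * γ) := by rw [hhγ, neg_neg]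
  have e22 : h * h = (0 : S) := by rw [← pow_two, hh]
  have e23 : β * β = (0 : S) := by rw [← pow_two, r5]
  have e24 : γ * γ = h * (γ * (d - a)) := by rw [← pow_two, r6]
  have e25 : θ * θ = -(h * (θ * x)) := by rw [← pow_two, hθθ]
  constructor <;>
  · simp only [pow_two, mul_add, add_mul, mul_sub, sub_mul, mul_neg, neg_mul,
      neg_neg, neg_add, mul_zero, zero_mul, mul_assoc,
      e1, e2, e3, e4, e5, e6, e7, e8, e9, e10, e11, e12, e13, e14, e15, e16,
      e17, e18, e19, e20, e21, e22, e23, e24, e25,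
      swap_aux e1, swap_aux e2, swap_aux e3, swap_aux e4, swap_aux e5,
      swap_aux e6, swap_aux e7, swap_aux e8, swap_aux e9, swap_aux e10,
      swap_aux e11, swap_aux e12, swap_aux e13, swap_aux e14, swap_aux e15,
      swap_aux e16, swap_aux e17, swap_aux e18, swap_aux e19, swap_aux e20,
      swap_aux e21, swap_aux e22, swap_aux e23, swap_aux e24, swap_aux e25]
    abel
end

section
/- Let A be an associative unital ring containing a central element i with i² = −1, and elements x, θ, D_x, D_θ, h ∈ A such that: h² = 0; h commutes with x and D_x; h anticommutes with θ and D_θ (hθ = −θh, hD_θ = −D_θh); and the h-deformed calculus relations hold: xθ = θx + hx², θ² = −hθx, D_xD_θ = D_θD_x, D_θ² = 0, D_x x = 1 + xD_x + hxD_θ, D_θ x = xD_θ, D_x θ = θD_x − h(xD_x + θD_θ), D_θ θ = 1 − θD_θ + hxD_θ. Define the hermitean operators x̂ := x, θ̂ := θ + hx, p̂_x := i(D_x − hD_θ), p̂_θ := D_θ. Then the coordinate and momentum relations of the h-deformed super-Heisenberg algebra hold: x̂θ̂ = θ̂x̂ + hx̂², θ̂² = −hθ̂x̂, p̂_x p̂_θ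 = p̂_θ p̂_x, and p̂_θ² = 0. -/
/-- The coordinate and momentum relations of the `h`-deformed super-Heisenberg
algebra: for the hermitean operators `x̂ = x`, `θ̂ = θ + hx`,
`p̂_x = i(D_x − hD_θ)`, `p̂_θ = D_θ` one has
`x̂θ̂ = θ̂x̂ + hx̂²`, `θ̂² = −hθ̂x̂`, `p̂_x p̂_θ = p̂_θ p̂_x` and `p̂_θ² = 0`. -/
theorem h_super_Heisenberg_coordinate_momentum {A : Type*} [Ring A]
    (i x θ Dx Dθ h : A)
    (hi_central : ∀ a : A, i * a = a * i) (hi2 : i ^ 2 = -1)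
    (hh : h ^ 2 = 0)
    (hhx : h * x = x * h) (hhDx : h * Dx = Dx * h)
    (hhθ : h * θ = -(θ * h)) (hhDθ : h * Dθ = -(Dθ * h))
    (hxθ : x * θ = θ * x + h * x ^ 2) (hθθ : θ ^ 2 = -(h * (θ * x)))
    (hDxDθ : Dx * Dθ = Dθ * Dx) (hDθ2 : Dθ ^ 2 = 0)
    (hDxx : Dx * x = 1 + x * Dx + h * (x * Dθ))
    (hDθx : Dθ * x = x * Dθ)
    (hDxθ : Dx * θ = θ * Dx - h * (x * Dx + θ * Dθ))
    (hDθθ : Dθ * θ = 1 - θ * Dθ + h * (x * Dθ)) :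
    x * (θ + h * x) = (θ + h * x) * x + h * x ^ 2 ∧
    (θ + h * x) ^ 2 = -(h * ((θ + h * x) * x)) ∧
    (i * (Dx - h * Dθ)) * Dθ = Dθ * (i * (Dx - h * Dθ)) ∧
    Dθ ^ 2 = 0 := by
  have hh' : h * h = 0 := by rw [← sq]; exact hh
  have hDD : Dθ * Dθ = 0 := by rw [← sq]; exact hDθ2
  have hθh : θ * h = -(h * θ) := by rw [hhθ, neg_neg]
  have hDθh : Dθ * h = -(h * Dθ) := by rw [hhDθ, neg_neg]
  refine ⟨?_, ?_, ?_, hDθ2⟩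
  · calc x * (θ + h * x) = x * θ + x * h * x := by noncomm_ring
    _ = (θ * x + h * x ^ 2) + h * x * x := by rw [hxθ, hhx]
    _ = (θ + h * x) * x + h * x ^ 2 := by noncomm_ring
  · have e1 : θ * (h * x) = -(h * (θ * x)) := by
      rw [(mul_assoc θ h x).symm, hθh]; noncomm_ring
    have e2 : h * (x * θ) = h * (θ * x) := by
      rw [hxθ, mul_add, ← mul_assoc h h, hh', zero_mul, add_zero]
    have e3 : (h * x) * (h * x) = 0 := by
      rw [show (h * x) * (h * x) = h * ((x * h) * x) by noncomm_ring, ← hhx,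
        show h * ((h * x) * x) = (h * h) * (x * x) by noncomm_ring, hh', zero_mul]
    calc (θ + h * x) ^ 2
        = θ ^ 2 + θ * (h * x) + h * (x * θ) + (h * x) * (h * x) := by noncomm_ring
    _ = -(h * (θ * x)) + -(h * (θ * x)) + h * (θ * x) + 0 := by rw [hθθ, e1, e2, e3]
    _ = -(h * (θ * x)) := by abel
    _ = -(h * ((θ + h * x) * x)) := by
        rw [show h * ((θ + h * x) * x) = h * (θ * x) + (h * h) * (x * x) by noncomm_ring,
          hh', zero_mul, add_zero]
  · have t1 : Dθ * (h * Dθ) = 0 := by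
      rw [(mul_assoc Dθ h Dθ).symm, hDθh,
        show -(h * Dθ) * Dθ = -(h * (Dθ * Dθ)) by noncomm_ring, hDD, mul_zero, neg_zero]
    have t2 : h * (Dθ * Dθ) = 0 := by rw [hDD, mul_zero]
    calc (i * (Dx - h * Dθ)) * Dθ
        = i * (Dx * Dθ) - i * (h * (Dθ * Dθ)) := by noncomm_ring
    _ = i * (Dθ * Dx) := by rw [hDxDθ, t2, mul_zero, sub_zero]
    _ = i * (Dθ * Dx) - i * (Dθ * (h * Dθ)) := by rw [t1, mul_zero, sub_zero]
    _ = i * (Dθ * (Dx - h * Dθ)) := by noncomm_ring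
    _ = (Dθ * (Dx - h * Dθ)) * i := hi_central _
    _ = Dθ * ((Dx - h * Dθ) * i) := by rw [mul_assoc]
    _ = Dθ * (i * (Dx - h * Dθ)) := by rw [← hi_central]
end

section
/- Let A be an associative unital ring containing a central element i with i² = −1, and elements x, θ, D_x, D_θ, h ∈ A such that: h² = 0; h commutes with x and D_x; h anticommutes with θ and D_θ; and the h-deformed calculus relations hold: xθ = θx + hx², θ² = −hθx, D_xD_θ = D_θD_x, D_θ² = 0, D_x x = 1 + xD_x + hxD_θ, D_θ x = xD_θ, D_x θ = θD_x − h(xD_x + θD_θ), D_θ θ = 1 − θD_θ + hxD_θ. Define x̂ := x, θ̂ := θ + hx, p̂_x := i(D_x − hD_θ), p̂_θ := D_θ. Then the mixed relations of the h-deformed super-Heisenberg algebra involving x̂ hold: p̂_x x̂ = x̂ p̂_x + i(1 + h x̂ p̂_θ) and p̂_θ x̂ = x̂ p̂_θ. -/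
/-- The mixed relations of the `h`-deformed super-Heisenberg algebra involving
`x̂`: for `x̂ = x`, `p̂_x = i(D_x − hD_θ)`, `p̂_θ = D_θ` one has
`p̂_x x̂ = x̂ p̂_x + i(1 + h x̂ p̂_θ)` and `p̂_θ x̂ = x̂ p̂_θ`. -/
theorem h_super_Heisenberg_mixed_x {A : Type*} [Ring A]
    (i x θ Dx Dθ h : A)
    (hi_central : ∀ a : A, i * a = a * i) (hi2 : i ^ 2 = -1)
    (hh : h ^ 2 = 0)
    (hhx : h * x = x * h) (hhDx : h * Dx = Dx * h)
    (hhθ : h * θ = -(θ * h)) (hhDθ : h * Dθ = -(Dθ * h))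
    (hxθ : x * θ = θ * x + h * x ^ 2) (hθθ : θ ^ 2 = -(h * (θ * x)))
    (hDxDθ : Dx * Dθ = Dθ * Dx) (hDθ2 : Dθ ^ 2 = 0)
    (hDxx : Dx * x = 1 + x * Dx + h * (x * Dθ))
    (hDθx : Dθ * x = x * Dθ)
    (hDxθ : Dx * θ = θ * Dx - h * (x * Dx + θ * Dθ))
    (hDθθ : Dθ * θ = 1 - θ * Dθ + h * (x * Dθ)) :
    (i * (Dx - h * Dθ)) * x = x * (i * (Dx - h * Dθ)) + i * (1 + h * (x * Dθ)) ∧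
    Dθ * x = x * Dθ := by
  refine ⟨?_, hDθx⟩
  have h1 : (i * (Dx - h * Dθ)) * x = i * (Dx * x) - i * (h * (Dθ * x)) := by
    noncomm_ring
  rw [h1, hDxx, hDθx]
  have h2 : x * (i * (Dx - h * Dθ)) = i * (x * (Dx - h * Dθ)) := by
    rw [← mul_assoc, ← hi_central, mul_assoc]
  rw [h2]
  have : h * (x * Dθ) = x * (h * Dθ) := by rw [← mul_assoc, hhx, mul_assoc]
  rw [this]
  noncomm_ring
end

section
/- Let A be an associative unital ring containing a central element i with i² = −1, and elements x, θ, D_x, D_θ, h ∈ A such that: h² = 0; h commutes with x and D_x; h anticommutes with θ and D_θ; and the h-deformed calculus relations hold: xθ = θx + hx², θ² = −hθx, D_xD_θ = D_θD_x, D_θ² = 0, D_x x = 1 + xD_x + hxD_θ, D_θ x = xD_θ, D_x θ = θD_x − h(xD_x + θD_θ), D_θ θ = 1 − θD_θ + hxD_θ. Define x̂ := x, θ̂ := θ + hx, p̂_x := i(D_x − hD_θ), p̂_θ := D_θ. Then the mixed relations of the h-deformed super-Heisenberg algebra involving θ̂ hold: p̂_x θ̂ = θ̂ p̂_x − h(x̂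 p̂_x + i θ̂ p̂_θ) and p̂_θ θ̂ = 1 − θ̂ p̂_θ + h x̂ p̂_θ, where x̂ := x. -/
/-- The mixed relations of the `h`-deformed super-Heisenberg algebra involving
`θ̂`: for `x̂ = x`, `θ̂ = θ + hx`, `p̂_x = i(D_x − hD_θ)`, `p̂_θ = D_θ` one has
`p̂_x θ̂ = θ̂ p̂_x − h(x̂ p̂_x + i θ̂ p̂_θ)` and `p̂_θ θ̂ = 1 − θ̂ p̂_θ + h x̂ p̂_θ`. -/
theorem h_super_Heisenberg_mixed_theta {A : Type*} [Ring A]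
    (i x θ Dx Dθ h : A)
    (hi_central : ∀ a : A, i * a = a * i) (hi2 : i ^ 2 = -1)
    (hh : h ^ 2 = 0)
    (hhx : h * x = x * h) (hhDx : h * Dx = Dx * h)
    (hhθ : h * θ = -(θ * h)) (hhDθ : h * Dθ = -(Dθ * h))
    (hxθ : x * θ = θ * x + h * x ^ 2) (hθθ : θ ^ 2 = -(h * (θ * x)))
    (hDxDθ : Dx * Dθ = Dθ * Dx) (hDθ2 : Dθ ^ 2 = 0)
    (hDxx : Dx * x = 1 + x * Dx + h * (x * Dθ))
    (hDθx : Dθ * x = x * Dθ)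
    (hDxθ : Dx * θ = θ * Dx - h * (x * Dx + θ * Dθ))
    (hDθθ : Dθ * θ = 1 - θ * Dθ + h * (x * Dθ)) :
    (i * (Dx - h * Dθ)) * (θ + h * x) =
        (θ + h * x) * (i * (Dx - h * Dθ)) -
          h * (x * (i * (Dx - h * Dθ)) + i * ((θ + h * x) * Dθ)) ∧
    Dθ * (θ + h * x) = 1 - (θ + h * x) * Dθ + h * (x * Dθ) := by
  have hic : ∀ a b : A, a * (i * b) = i * (a * b) := by
    intro a b; rw [← mul_assoc, ← hi_central, mul_assoc]
  have hic' : ∀ a : A, a * i = i * a := fun a => (hi_central a).symm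
  have hhh : ∀ a : A, h * (h * a) = 0 := by
    intro a; rw [← mul_assoc, ← pow_two, hh, zero_mul]
  have hhh' : h * h = 0 := by rw [← pow_two, hh]
  have hxh : ∀ a : A, x * (h * a) = h * (x * a) := by
    intro a; rw [← mul_assoc, ← hhx, mul_assoc]
  have hDxh : ∀ a : A, Dx * (h * a) = h * (Dx * a) := by
    intro a; rw [← mul_assoc, ← hhDx, mul_assoc]
  have hθh' : θ * h = -(h * θ) := by rw [hhθ, neg_neg]
  have hθh : ∀ a : A, θ * (h * a) = -(h * (θ * a)) := by
    intro a; rw [← mul_assoc, hθh']; noncomm_ring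
  have hDθh' : Dθ * h = -(h * Dθ) := by rw [hhDθ, neg_neg]
  have hDθh : ∀ a : A, Dθ * (h * a) = -(h * (Dθ * a)) := by
    intro a; rw [← mul_assoc, hDθh']; noncomm_ring
  have hxh' : x * h = h * x := hhx.symm
  have hDxh' : Dx * h = h * Dx := hhDx.symm
  have hDxx' : ∀ a : A, Dx * (x * a) = a + x * (Dx * a) + h * (x * (Dθ * a)) := by
    intro a
    rw [← mul_assoc, hDxx]; noncomm_ring
  have hDθx' : ∀ a : A, Dθ * (x * a) = x * (Dθ * a) := by
    intro a; rw [← mul_assoc, hDθx, mul_assoc]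
  have hDxθ' : ∀ a : A, Dx * (θ * a) = θ * (Dx * a) - h * (x * (Dx * a)) - h * (θ * (Dθ * a)) := by
    intro a
    rw [← mul_assoc, hDxθ]; noncomm_ring
  have hDθθ' : ∀ a : A, Dθ * (θ * a) = a - θ * (Dθ * a) + h * (x * (Dθ * a)) := by
    intro a
    rw [← mul_assoc, hDθθ]; noncomm_ring
  constructor
  · simp only [mul_add, add_mul, mul_sub, sub_mul, mul_assoc, mul_one, one_mul, mul_neg,
      neg_mul, hic, hic', hhh, hhh', hxh, hDxh, hθh, hDθh, hxh', hDxh', hθh', hDθh',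
      hDxx', hDθx', hDxθ', hDθθ', hDxx, hDθx, hDxθ, hDθθ, mul_zero, zero_mul, neg_neg]
    abel
  · simp only [mul_add, add_mul, mul_sub, sub_mul, mul_assoc, mul_one, one_mul, mul_neg,
      neg_mul, hic, hic', hhh, hhh', hxh, hDxh, hθh, hDθh, hxh', hDxh', hθh', hDθh',
      hDxx', hDθx', hDxθ', hDθθ', hDxx, hDθx, hDxθ, hDθθ, mul_zero, zero_mul, neg_neg]
    abel
end

section
/- Let A be an associative unital ring, q a central element of A admitting a central inverse q⁻¹ and such that q − 1 admits a central inverse c₀ := (q−1)⁻¹, and let x, θ, D_x, D_θ, h ∈ A satisfy: h² = 0; h commutes with x and D_x; h anticommutes with θ and D_θ; q and c₀ commute with all of x, θ, D_x, D_θ, h; and the (h,q)-deformed calculus relations hold: xθ = qθx + hx², θ² = −hθx, D_θD_x = qD_xD_θ, D_θ² = 0, D_x x = 1 + q²xD_x + (q²−1)θD_θ + hxD_θ, D_θ x = qxD_θ, D_x θ = qθD_x − qh(xD_x + θD_θ), D_θ θ = 1 − θD_θ + hxD_θ. Define A⁺ := x, B := D_θ, A := D_x − c₀hD_θ, B⁺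 := θ + c₀hx. Then all h-dependence cancels and the q-deformed super-oscillator algebra holds: A·A⁺ = 1 + q²A⁺·A + (q²−1)B⁺·B; B·B⁺ = 1 − B⁺·B; B² = 0; (B⁺)² = 0; A·B⁺ = qB⁺·A; A·B = q⁻¹B·A. -/
/-- Under the identification `A⁺ = x`, `B = D_θ`, `A = D_x − (q−1)⁻¹ h D_θ`,
`B⁺ = θ + (q−1)⁻¹ h x`, all `h`-dependence cancels in the `(h,q)`-deformed
calculus and one obtains the `q`-deformed super-oscillator algebra. -/
theorem q_super_oscillator_from_hq_calculus {A : Type*} [Ring A]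
    (q qinv c₀ x θ Dx Dθ h : A)
    -- q is central with central inverse qinv
    (hq_central : ∀ a : A, q * a = a * q)
    (hqinv_central : ∀ a : A, qinv * a = a * qinv)
    (hq_qinv : q * qinv = 1) (hqinv_q : qinv * q = 1)
    -- q − 1 has central inverse c₀
    (hc₀_central : ∀ a : A, c₀ * a = a * c₀)
    (hq1c₀ : (q - 1) * c₀ = 1) (hc₀q1 : c₀ * (q - 1) = 1)
    -- the Grassmann parameter h
    (hh : h ^ 2 = 0)
    (hhx : h * x = x * h) (hhDx : h * Dx = Dx * h)
    (hhθ : h * θ = -(θ * h)) (hhDθ : h * Dθ = -(Dθ * h))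
    -- the (h,q)-deformed calculus relations
    (hxθ : x * θ = q * (θ * x) + h * x ^ 2)
    (hθθ : θ ^ 2 = -(h * (θ * x)))
    (hDθDx : Dθ * Dx = q * (Dx * Dθ))
    (hDθ2 : Dθ ^ 2 = 0)
    (hDxx : Dx * x = 1 + q ^ 2 * (x * Dx) + (q ^ 2 - 1) * (θ * Dθ) + h * (x * Dθ))
    (hDθx : Dθ * x = q * (x * Dθ))
    (hDxθ : Dx * θ = q * (θ * Dx) - q * (h * (x * Dx + θ * Dθ)))
    (hDθθ : Dθ * θ = 1 - θ * Dθ + h * (x * Dθ)) :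
    (Dx - c₀ * h * Dθ) * x =
        1 + q ^ 2 * (x * (Dx - c₀ * h * Dθ)) +
          (q ^ 2 - 1) * ((θ + c₀ * h * x) * Dθ) ∧
    Dθ * (θ + c₀ * h * x) = 1 - (θ + c₀ * h * x) * Dθ ∧
    Dθ ^ 2 = 0 ∧
    (θ + c₀ * h * x) ^ 2 = 0 ∧
    (Dx - c₀ * h * Dθ) * (θ + c₀ * h * x) =
        q * ((θ + c₀ * h * x) * (Dx - c₀ * h * Dθ)) ∧
    (Dx - c₀ * h * Dθ) * Dθ = qinv * (Dθ * (Dx - c₀ * h * Dθ)) := by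

  -- basic consequences
  have hch : h * h = 0 := by rw [← pow_two]; exact hh
  have hhh' : ∀ b : A, h * (h * b) = 0 := fun b => by rw [← mul_assoc, hch, zero_mul]
  have hDθDθ : Dθ * Dθ = 0 := by rw [← pow_two]; exact hDθ2
  have hDθDθ' : ∀ b : A, Dθ * (Dθ * b) = 0 := fun b => by
    rw [← mul_assoc, hDθDθ, zero_mul]
  have hθθ' : θ * θ = -(h * (θ * x)) := by rw [← pow_two]; exact hθθ
  -- moving central elements
  have mc : ∀ a b : A, a * (c₀ * b) = c₀ * (a * b) := fun a b => by
    rw [← mul_assoc, ← hc₀_central, mul_assoc]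
  have mqh : ∀ b : A, h * (q * b) = q * (h * b) := fun b => by
    rw [← mul_assoc, ← hq_central, mul_assoc]
  have mqx : ∀ b : A, x * (q * b) = q * (x * b) := fun b => by
    rw [← mul_assoc, ← hq_central, mul_assoc]
  have mqθ : ∀ b : A, θ * (q * b) = q * (θ * b) := fun b => by
    rw [← mul_assoc, ← hq_central, mul_assoc]
  have mqDx : ∀ b : A, Dx * (q * b) = q * (Dx * b) := fun b => by
    rw [← mul_assoc, ← hq_central, mul_assoc]
  have mqDθ : ∀ b : A, Dθ * (q * b) = q * (Dθ * b) := fun b => by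
    rw [← mul_assoc, ← hq_central, mul_assoc]
  have hqinvq' : ∀ b : A, qinv * (q * b) = b := fun b => by
    rw [← mul_assoc, hqinv_q, one_mul]
  have hcq : c₀ * q = 1 + c₀ := by
    have e : c₀ * q = c₀ * (q - 1) + c₀ := by noncomm_ring
    rw [e, hc₀q1]
  have hcq' : ∀ b : A, c₀ * (q * b) = b + c₀ * b := fun b => by
    rw [← mul_assoc, hcq, add_mul, one_mul]
  -- moving h
  have mhx : x * h = h * x := hhx.symm
  have mhx' : ∀ b : A, x * (h * b) = h * (x * b) := fun b => by
    rw [← mul_assoc, ← hhx, mul_assoc]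
  have mhθ : θ * h = -(h * θ) := by rw [hhθ, neg_neg]
  have mhθ' : ∀ b : A, θ * (h * b) = -(h * (θ * b)) := fun b => by
    rw [← mul_assoc, mhθ, neg_mul, mul_assoc]
  have mhDx : Dx * h = h * Dx := hhDx.symm
  have mhDx' : ∀ b : A, Dx * (h * b) = h * (Dx * b) := fun b => by
    rw [← mul_assoc, ← hhDx, mul_assoc]
  have mhDθ : Dθ * h = -(h * Dθ) := by rw [hhDθ, neg_neg]
  have mhDθ' : ∀ b : A, Dθ * (h * b) = -(h * (Dθ * b)) := fun b => by
    rw [← mul_assoc, mhDθ, neg_mul, mul_assoc]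
  refine ⟨?_, ?_, hDθ2, ?_, ?_, ?_⟩
  · simp only [pow_two, mul_add, add_mul, mul_sub, sub_mul, mul_neg, neg_mul, mul_one, one_mul,
      mul_zero, zero_mul, neg_neg, mul_assoc, mc, mqh, mqx, mqθ, mqDx, mqDθ, hqinvq', hcq, hcq',
      mhx, mhx', mhθ, mhθ', mhDx, mhDx', mhDθ, mhDθ', hch, hhh', hDθDθ, hDθDθ', hθθ',
      hxθ, hDθDx, hDxx, hDθx, hDxθ, hDθθ]
    first | noncomm_ring | abel
  · simp only [pow_two, mul_add, add_mul, mul_sub, sub_mul, mul_neg, neg_mul, mul_one, one_mul,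
      mul_zero, zero_mul, neg_neg, mul_assoc, mc, mqh, mqx, mqθ, mqDx, mqDθ, hqinvq', hcq, hcq',
      mhx, mhx', mhθ, mhθ', mhDx, mhDx', mhDθ, mhDθ', hch, hhh', hDθDθ, hDθDθ', hθθ',
      hxθ, hDθDx, hDxx, hDθx, hDxθ, hDθθ]
    first | noncomm_ring | abel
  · simp only [pow_two, mul_add, add_mul, mul_sub, sub_mul, mul_neg, neg_mul, mul_one, one_mul,
      mul_zero, zero_mul, neg_neg, mul_assoc, mc, mqh, mqx, mqθ, mqDx, mqDθ, hqinvq', hcq, hcq',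
      mhx, mhx', mhθ, mhθ', mhDx, mhDx', mhDθ, mhDθ', hch, hhh', hDθDθ, hDθDθ', hθθ',
      hxθ, hDθDx, hDxx, hDθx, hDxθ, hDθθ]
    first | noncomm_ring | abel
  · simp only [pow_two, mul_add, add_mul, mul_sub, sub_mul, mul_neg, neg_mul, mul_one, one_mul,
      mul_zero, zero_mul, neg_neg, mul_assoc, mc, mqh, mqx, mqθ, mqDx, mqDθ, hqinvq', hcq, hcq',
      mhx, mhx', mhθ, mhθ', mhDx, mhDx', mhDθ, mhDθ', hch, hhh', hDθDθ, hDθDθ', hθθ',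
      hxθ, hDθDx, hDxx, hDθx, hDxθ, hDθθ]
    first | noncomm_ring | abel
  · simp only [pow_two, mul_add, add_mul, mul_sub, sub_mul, mul_neg, neg_mul, mul_one, one_mul,
      mul_zero, zero_mul, neg_neg, mul_assoc, mc, mqh, mqx, mqθ, mqDx, mqDθ, hqinvq', hcq, hcq',
      mhx, mhx', mhθ, mhθ', mhDx, mhDx', mhDθ, mhDθ', hch, hhh', hDθDθ, hDθDθ', hθθ',
      hxθ, hDθDx, hDxx, hDθx, hDxθ, hDθθ]
    first | noncomm_ring | abel
end

section
/- Let A be an associative unital ring, q a central element of A such that q − 1 admits a central inverse c₀ := (q−1)⁻¹, and let x', θ', h ∈ A satisfy: x'θ' = qθ'x'; θ'² = 0; hx' = x'h; hθ' = −θ'h; h² = 0; and c₀, q commute with x', θ', h. Define x := x' and θ := θ' − c₀·h·x'. Then θ² = −hθx. -/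
/-- Contraction of the quantum superplane: if `x'θ' = qθ'x'` and `θ'² = 0`,
then the new odd coordinate `θ = θ' − (q−1)⁻¹ h x'` satisfies `θ² = −hθx`
where `x = x'`. -/
theorem h_superplane_square_from_contraction {A : Type*} [Ring A]
    (q c₀ x' θ' h : A)
    -- q is central and q − 1 has central inverse c₀
    (hq_central : ∀ a : A, q * a = a * q)
    (hc₀_central : ∀ a : A, c₀ * a = a * c₀)
    (hq1c₀ : (q - 1) * c₀ = 1) (hc₀q1 : c₀ * (q - 1) = 1)
    -- the quantum superplane relations and the Grassmann parameter h
    (hx'θ' : x' * θ' = q * (θ' * x')) (hθ'2 : θ' ^ 2 = 0)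
    (hhx' : h * x' = x' * h) (hhθ' : h * θ' = -(θ' * h))
    (hh : h ^ 2 = 0) :
    (θ' - c₀ * h * x') ^ 2 = -(h * ((θ' - c₀ * h * x') * x')) := by
  have hθθ : θ' * θ' = 0 := by rw [← pow_two]; exact hθ'2
  have hhh : h * h = 0 := by rw [← pow_two]; exact hh
  have hθh : θ' * h = -(h * θ') := by rw [hhθ', neg_neg]
  -- term 2
  have t2 : θ' * (c₀ * h * x') = -(c₀ * (h * θ' * x')) := by
    calc θ' * (c₀ * h * x') = (θ' * c₀) * (h * x') := by noncomm_ring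
      _ = (c₀ * θ') * (h * x') := by rw [hc₀_central θ']
      _ = c₀ * ((θ' * h) * x') := by noncomm_ring
      _ = c₀ * (-(h * θ') * x') := by rw [hθh]
      _ = -(c₀ * (h * θ' * x')) := by noncomm_ring
  -- term 3
  have t3 : c₀ * h * x' * θ' = q * (c₀ * (h * θ' * x')) := by
    calc c₀ * h * x' * θ' = c₀ * (h * (x' * θ')) := by noncomm_ring
      _ = c₀ * (h * (q * (θ' * x'))) := by rw [hx'θ']
      _ = c₀ * ((h * q) * (θ' * x')) := by noncomm_ring
      _ = c₀ * ((q * h) * (θ' * x')) := by rw [hq_central h]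
      _ = (c₀ * q) * (h * (θ' * x')) := by noncomm_ring
      _ = (q * c₀) * (h * (θ' * x')) := by rw [hc₀_central q]
      _ = q * (c₀ * (h * θ' * x')) := by noncomm_ring
  -- term 4
  have t4 : c₀ * h * x' * (c₀ * h * x') = 0 := by
    calc c₀ * h * x' * (c₀ * h * x') = c₀ * h * ((x' * c₀) * (h * x')) := by noncomm_ring
      _ = c₀ * h * ((c₀ * x') * (h * x')) := by rw [hc₀_central x']
      _ = c₀ * ((h * c₀) * (x' * h) * x') := by noncomm_ring
      _ = c₀ * ((c₀ * h) * (h * x') * x') := by rw [hc₀_central h, hhx']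
      _ = (c₀ * c₀) * ((h * h) * (x' * x')) := by noncomm_ring
      _ = 0 := by rw [hhh]; noncomm_ring
  -- rhs junk term
  have t5 : h * (c₀ * h * x' * x') = 0 := by
    calc h * (c₀ * h * x' * x') = (h * c₀) * (h * (x' * x')) := by noncomm_ring
      _ = (c₀ * h) * (h * (x' * x')) := by rw [hc₀_central h]
      _ = c₀ * ((h * h) * (x' * x')) := by noncomm_ring
      _ = 0 := by rw [hhh]; noncomm_ring
  have key : (θ' - c₀ * h * x') ^ 2 =
      θ' * θ' - θ' * (c₀ * h * x') - c₀ * h * x' * θ' + c₀ * h * x' * (c₀ * h * x') := by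
    noncomm_ring
  have rhs : -(h * ((θ' - c₀ * h * x') * x')) = -(h * θ' * x') + h * (c₀ * h * x' * x') := by
    noncomm_ring
  rw [key, hθθ, t2, t3, t4, rhs, t5]
  set m := h * θ' * x' with hm
  have : c₀ * m - q * (c₀ * m) = -(((q - 1) * c₀) * m) := by
    rw [sub_mul, one_mul, sub_mul]
    noncomm_ring
  calc 0 - -(c₀ * m) - q * (c₀ * m) + 0 = c₀ * m - q * (c₀ * m) := by noncomm_ring
    _ = -(((q - 1) * c₀) * m) := this
    _ = -(1 * m) := by rw [hq1c₀]
    _ = -m + 0 := by noncomm_ring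
end

section
/- Let A be an associative unital ring, q a central element of A such that q − 1 admits a central inverse c₀ := (q−1)⁻¹, and let x', θ', dx', dθ', h ∈ A satisfy: h² = 0; h commutes with the even elements x', dθ'; h anticommutes with the odd elements θ', dx'; q and c₀ commute with everything listed; and the q-deformed coordinate–differential relations hold: x'·dx' = q²·dx'·x'; x'·dθ' = q·dθ'·x' + (q²−1)·dx'·θ'; θ'·dx' = −q·dx'·θ'; θ'·dθ' = dθ'·θ'. Define x := x', θ := θ' − c₀hx', dx := dx', dθ := dθ' + c₀h·dx'. Then the (h,q)-deformed relations hold: x·dx = q²·dx·x; x·dθ = q·dθ·x − h·dx·x + (q²−1)·dx·θ; θ·dx = −q·dx·θ − qh·dx·x; θ·dθ = dθ·θ − h(q·dx·θ + dθ·x). -/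
/-- Contraction of the `q`-deformed coordinate–differential relations: the
transformed quantities `x = x'`, `θ = θ' − c₀hx'`, `dx = dx'`,
`dθ = dθ' + c₀h·dx'` (with `c₀ = (q−1)⁻¹`) satisfy the `(h,q)`-deformed
relations (18). -/
theorem hq_coordinate_differential_relations {A : Type*} [Ring A]
    (q c₀ x' θ' dx' dθ' h : A)
    -- q is central and q − 1 has central inverse c₀
    (hq_central : ∀ a : A, q * a = a * q)
    (hc₀_central : ∀ a : A, c₀ * a = a * c₀)
    (hq1c₀ : (q - 1) * c₀ = 1) (hc₀q1 : c₀ * (q - 1) = 1)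
    -- the Grassmann parameter h: commutes with even x', dθ', anticommutes
    -- with odd θ', dx'
    (hh : h ^ 2 = 0)
    (hhx' : h * x' = x' * h) (hhdθ' : h * dθ' = dθ' * h)
    (hhθ' : h * θ' = -(θ' * h)) (hhdx' : h * dx' = -(dx' * h))
    -- the q-deformed coordinate–differential relations
    (h1 : x' * dx' = q ^ 2 * (dx' * x'))
    (h2 : x' * dθ' = q * (dθ' * x') + (q ^ 2 - 1) * (dx' * θ'))
    (h3 : θ' * dx' = -(q * (dx' * θ')))
    (h4 : θ' * dθ' = dθ' * θ') :
    x' * dx' = q ^ 2 * (dx' * x') ∧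
    x' * (dθ' + c₀ * h * dx') =
        q * ((dθ' + c₀ * h * dx') * x') - h * (dx' * x') +
          (q ^ 2 - 1) * (dx' * (θ' - c₀ * h * x')) ∧
    (θ' - c₀ * h * x') * dx' =
        -(q * (dx' * (θ' - c₀ * h * x'))) - q * (h * (dx' * x')) ∧
    (θ' - c₀ * h * x') * (dθ' + c₀ * h * dx') =
        (dθ' + c₀ * h * dx') * (θ' - c₀ * h * x') -
          h * (q * (dx' * (θ' - c₀ * h * x')) + (dθ' + c₀ * h * dx') * x') := by
  have aq : ∀ a : A, a * q = q * a := fun a => (hq_central a).symm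
  have aq' : ∀ a b : A, a * (q * b) = q * (a * b) := fun a b => by
    rw [← mul_assoc, aq, mul_assoc]
  have acg : ∀ a : A, a * c₀ = c₀ * a := fun a => (hc₀_central a).symm
  have ace : ∀ a b : A, a * (c₀ * b) = c₀ * (a * b) := fun a b => by
    rw [← mul_assoc, acg, mul_assoc]
  have ac1 : h * c₀ = c₀ * h := acg h
  have ac2 : x' * c₀ = c₀ * x' := acg x'
  have ac3 : θ' * c₀ = c₀ * θ' := acg θ'
  have ac4 : dx' * c₀ = c₀ * dx' := acg dx'
  have ac5 : dθ' * c₀ = c₀ * dθ' := acg dθ'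
  have ac1' : ∀ b : A, h * (c₀ * b) = c₀ * (h * b) := ace h
  have ac2' : ∀ b : A, x' * (c₀ * b) = c₀ * (x' * b) := ace x'
  have ac3' : ∀ b : A, θ' * (c₀ * b) = c₀ * (θ' * b) := ace θ'
  have ac4' : ∀ b : A, dx' * (c₀ * b) = c₀ * (dx' * b) := ace dx'
  have ac5' : ∀ b : A, dθ' * (c₀ * b) = c₀ * (dθ' * b) := ace dθ'
  have cq : c₀ * q = 1 + c₀ := by
    have := hc₀q1; rw [mul_sub, mul_one] at this
    linear_combination (norm := noncomm_ring) this
  have cq' : ∀ b : A, c₀ * (q * b) = b + c₀ * b := fun b => by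
    rw [← mul_assoc, cq, add_mul, one_mul]
  have qc : q * c₀ = 1 + c₀ := by
    have := hq1c₀; rw [sub_mul, one_mul] at this
    linear_combination (norm := noncomm_ring) this
  have qc' : ∀ b : A, q * (c₀ * b) = b + c₀ * b := fun b => by
    rw [← mul_assoc, qc, add_mul, one_mul]
  have hh0 : h * h = 0 := by rw [← pow_two]; exact hh
  have hh0' : ∀ b : A, h * (h * b) = 0 := fun b => by
    rw [← mul_assoc, hh0, zero_mul]
  have H1 : ∀ b : A, x' * (dx' * b) = q * (q * (dx' * (x' * b))) := fun b => by
    rw [← mul_assoc, h1, pow_two]; noncomm_ring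
  have H2 : ∀ b : A, x' * (dθ' * b)
      = q * (dθ' * (x' * b)) + (q ^ 2 - 1) * (dx' * (θ' * b)) := fun b => by
    rw [← mul_assoc, h2]; noncomm_ring
  have H3 : ∀ b : A, θ' * (dx' * b) = -(q * (dx' * (θ' * b))) := fun b => by
    rw [← mul_assoc, h3]; noncomm_ring
  have H4 : ∀ b : A, θ' * (dθ' * b) = dθ' * (θ' * b) := fun b => by
    rw [← mul_assoc, h4, mul_assoc]
  have Hx : ∀ b : A, x' * (h * b) = h * (x' * b) := fun b => by
    rw [← mul_assoc, ← hhx', mul_assoc]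
  have Hx0 : x' * h = h * x' := hhx'.symm
  have Hθ : ∀ b : A, θ' * (h * b) = -(h * (θ' * b)) := fun b => by
    rw [← mul_assoc]
    have : θ' * h = -(h * θ') := by rw [hhθ', neg_neg]
    rw [this]; noncomm_ring
  have Hθ0 : θ' * h = -(h * θ') := by rw [hhθ', neg_neg]
  have Hdx : ∀ b : A, dx' * (h * b) = -(h * (dx' * b)) := fun b => by
    rw [← mul_assoc]
    have : dx' * h = -(h * dx') := by rw [hhdx', neg_neg]
    rw [this]; noncomm_ring
  have Hdx0 : dx' * h = -(h * dx') := by rw [hhdx', neg_neg]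
  have Hdθ : ∀ b : A, dθ' * (h * b) = h * (dθ' * b) := fun b => by
    rw [← mul_assoc, ← hhdθ', mul_assoc]
  have Hdθ0 : dθ' * h = h * dθ' := hhdθ'.symm
  refine ⟨h1, ?_, ?_, ?_⟩ <;>
  · simp only [pow_two, mul_add, add_mul, mul_sub, sub_mul, mul_neg, neg_mul,
      neg_neg, mul_one, one_mul, mul_assoc, h1, h2, h3, h4, H1, H2, H3, H4,
      Hx, Hx0, Hθ, Hθ0, Hdx, Hdx0, Hdθ, Hdθ0, hh0, hh0', aq, aq', ac1, ac2, ac3, ac4, ac5, ac1', ac2', ac3', ac4', ac5',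
      cq, cq', qc, qc', zero_mul, mul_zero, neg_zero, add_zero, zero_add,
      sub_zero, zero_sub]
    abel
end

section
/- Let A be an associative unital ring, q a central element of A such that q − 1 admits a central inverse c₀ := (q−1)⁻¹, and let ∂_{x'}, ∂_{θ'}, h ∈ A satisfy: ∂_{θ'}·∂_{x'} = q·∂_{x'}·∂_{θ'}; ∂_{θ'}² = 0; h² = 0; h anticommutes with the odd element ∂_{θ'} (h·∂_{θ'} = −∂_{θ'}·h); and c₀, q commute with ∂_{x'}. Define ∂_x := ∂_{x'} + c₀h·∂_{θ'} and ∂_θ := ∂_{θ'}. Then the transformed derivatives satisfy the same algebra: ∂_θ·∂_x = q·∂_x·∂_θ and ∂_θ² = 0. -/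
/-- The transformed derivatives `∂_x = ∂_{x'} + c₀h·∂_{θ'}`, `∂_θ = ∂_{θ'}`
(with `c₀ = (q−1)⁻¹`) satisfy the same algebra as the original ones:
`∂_θ∂_x = q∂_x∂_θ` and `∂_θ² = 0`. -/
theorem derivatives_algebra_preserved {A : Type*} [Ring A]
    (q c₀ px' pθ' h : A)
    -- q is central and q − 1 has central inverse c₀
    (hq_central : ∀ a : A, q * a = a * q)
    (hc₀_central : ∀ a : A, c₀ * a = a * c₀)
    (hq1c₀ : (q - 1) * c₀ = 1) (hc₀q1 : c₀ * (q - 1) = 1)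
    -- the derivative relations
    (hpθpx : pθ' * px' = q * (px' * pθ')) (hpθ2 : pθ' ^ 2 = 0)
    -- the Grassmann parameter h anticommutes with the odd derivative ∂_{θ'}
    (hh : h ^ 2 = 0) (hhpθ' : h * pθ' = -(pθ' * h)) :
    pθ' * (px' + c₀ * h * pθ') = q * ((px' + c₀ * h * pθ') * pθ') ∧
    pθ' ^ 2 = 0 := by
  have hsq : pθ' * pθ' = 0 := by rw [← sq]; exact hpθ2
  have hθh : pθ' * h = -(h * pθ') := by rw [hhpθ', neg_neg]
  refine ⟨?_, hpθ2⟩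
  have h1 : pθ' * (c₀ * h * pθ') = 0 := by
    rw [mul_assoc c₀, ← mul_assoc pθ', ← hc₀_central pθ', mul_assoc c₀,
      ← mul_assoc pθ', hθh, neg_mul, mul_assoc, hsq, mul_zero, neg_zero, mul_zero]
  have h2 : c₀ * h * pθ' * pθ' = 0 := by
    rw [mul_assoc, hsq, mul_zero]
  rw [mul_add, h1, add_zero, add_mul, h2, add_zero, hpθpx]
end
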